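/- arXiv:math/0007093 — 2 statements merged into one kernel-verified Lean document; each statement's English description precedes it below -/
import Mathlib

section
/- Fix an integer n with 0 ≤ n. Then for every real v, lim_{d→∞} f_{d,n}(v) = sin(π(v-n))/(π(v-n)) if v ≠ n, and the limit is 1 if v = n, where f_{d,n}(v) = ∏_{j=-d, j≠n}^{d} (v-j)/(n-j). -/
open Real Filter

private lemma prod_Ioc_int_aux (m : ℕ) (f : ℤ → ℝ) :
    ∏ k ∈ Finset.Ioc (0:ℤ) (m:ℤ), f k = ∏ i ∈ Finset.range m, f ((i:ℤ)+1) := by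
  refine Finset.prod_nbij' (fun k => (k - 1).toNat) (fun i => (i:ℤ) + 1) ?_ ?_ ?_ ?_ ?_
  · intro a ha; simp only [Finset.mem_Ioc] at ha; simp only [Finset.mem_range]; omega
  · intro a ha; simp only [Finset.mem_range] at ha; simp only [Finset.mem_Ioc]; omega
  · intro a ha; simp only [Finset.mem_Ioc] at ha; omega
  · intro a ha; simp only [Finset.mem_range] at ha; omega
  · intro a ha; simp only [Finset.mem_Ioc] at ha; congr 1; omega

private lemma key_id (n d : ℕ) (hd : n ≤ d) (v : ℝ) :
    ∏ j ∈ (Finset.Icc (-(d:ℤ)) d).erase (n : ℤ), (v - j) / ((n : ℝ) - j)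
    = (∏ i ∈ Finset.range (d - n), (1 - (v - n)^2 / ((i:ℝ)+1)^2)) *
      (∏ i ∈ Finset.range (2*n), (1 + (v - n) / ((d - n + 1 + i : ℕ) : ℝ))) := by
  set w : ℝ := v - n with hw
  -- step 1 : reindex by k = n - j
  have step1 : ∏ j ∈ (Finset.Icc (-(d:ℤ)) d).erase (n : ℤ), (v - j) / ((n : ℝ) - j)
      = ∏ k ∈ (Finset.Icc ((n:ℤ) - d) ((n:ℤ) + d)).erase 0, (w + (k:ℝ)) / (k:ℝ) := by
    refine Finset.prod_nbij' (fun j => (n:ℤ) - j) (fun k => (n:ℤ) - k) ?_ ?_ ?_ ?_ ?_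
    · intro a ha; simp only [Finset.mem_erase, Finset.mem_Icc] at ha ⊢; omega
    · intro a ha; simp only [Finset.mem_erase, Finset.mem_Icc] at ha ⊢; omega
    · intro a _; ring
    · intro a _; ring
    · intro a _; push_cast; rw [hw]; ring
  -- step 2 : split off negative part
  have hset : (Finset.Icc ((n:ℤ) - d) ((n:ℤ) + d)).erase 0
      = Finset.Icc ((n:ℤ) - d) (-1) ∪ Finset.Ioc 0 ((n:ℤ) + d) := by
    ext k
    simp only [Finset.mem_erase, Finset.mem_Icc, Finset.mem_union, Finset.mem_Ioc]
    omega
  have hdisj : Disjoint (Finset.Icc ((n:ℤ) - d) (-1)) (Finset.Ioc 0 ((n:ℤ) + d)) := by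
    rw [Finset.disjoint_left]
    intro k hk hk'
    simp only [Finset.mem_Icc] at hk
    simp only [Finset.mem_Ioc] at hk'
    omega
  -- step 3 : negate
  have step3 : ∏ k ∈ Finset.Icc ((n:ℤ) - d) (-1), (w + (k:ℝ)) / (k:ℝ)
      = ∏ k ∈ Finset.Ioc (0:ℤ) ((d:ℤ) - n), (w - (k:ℝ)) / (-(k:ℝ)) := by
    refine Finset.prod_nbij' (fun k => -k) (fun k => -k) ?_ ?_ ?_ ?_ ?_
    · intro a ha; simp only [Finset.mem_Icc] at ha; simp only [Finset.mem_Ioc]; omega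
    · intro a ha; simp only [Finset.mem_Ioc] at ha; simp only [Finset.mem_Icc]; omega
    · intro a _; ring
    · intro a _; ring
    · intro a _; push_cast; ring_nf
  -- step 4 : split positive part
  have hsplit : Finset.Ioc (0:ℤ) ((n:ℤ) + d)
      = Finset.Ioc (0:ℤ) ((d:ℤ) - n) ∪ Finset.Ioc ((d:ℤ) - n) ((n:ℤ) + d) := by
    rw [Finset.Ioc_union_Ioc_eq_Ioc] <;> omega
  have hdisj2 : Disjoint (Finset.Ioc (0:ℤ) ((d:ℤ) - n)) (Finset.Ioc ((d:ℤ) - n) ((n:ℤ) + d)) := by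
    rw [Finset.disjoint_left]
    intro k hk hk'
    simp only [Finset.mem_Ioc] at hk hk'
    omega
  rw [step1, hset, Finset.prod_union hdisj, step3, hsplit, Finset.prod_union hdisj2,
    ← mul_assoc, ← Finset.prod_mul_distrib]
  -- step 5 : pair up
  have step5 : ∏ k ∈ Finset.Ioc (0:ℤ) ((d:ℤ) - n),
      ((w - (k:ℝ)) / (-(k:ℝ)) * ((w + (k:ℝ)) / (k:ℝ)))
      = ∏ i ∈ Finset.range (d - n), (1 - w^2 / ((i:ℝ)+1)^2) := by
    have hm : ((d - n : ℕ) : ℤ) = (d:ℤ) - n := by omega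
    rw [← hm, prod_Ioc_int_aux (d - n) (fun k => (w - (k:ℝ)) / (-(k:ℝ)) * ((w + (k:ℝ)) / (k:ℝ)))]
    have hgen : ∀ x : ℝ, x ≠ 0 → (w - x) / (-x) * ((w + x) / x) = 1 - w ^ 2 / x ^ 2 := by
      intro x hx
      field_simp
      ring
    refine Finset.prod_congr rfl fun i _ => ?_
    have h1 : (((i:ℤ) + 1 : ℤ) : ℝ) = (i:ℝ) + 1 := by push_cast; ring
    rw [h1]
    exact hgen _ (by positivity)
  -- step 6 : tail product
  have step6 : ∏ k ∈ Finset.Ioc ((d:ℤ) - n) ((n:ℤ) + d), (w + (k:ℝ)) / (k:ℝ)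
      = ∏ i ∈ Finset.range (2*n), (1 + w / ((d - n + 1 + i : ℕ) : ℝ)) := by
    refine Finset.prod_nbij' (fun k => (k - ((d:ℤ) - n + 1)).toNat)
      (fun i => (d:ℤ) - n + 1 + i) ?_ ?_ ?_ ?_ ?_
    · intro a ha; simp only [Finset.mem_Ioc] at ha; simp only [Finset.mem_range]; omega
    · intro a ha; simp only [Finset.mem_range] at ha; simp only [Finset.mem_Ioc]; omega
    · intro a ha; simp only [Finset.mem_Ioc] at ha; omega
    · intro a ha; simp only [Finset.mem_range] at ha; omega
    · intro k hk
      simp only [Finset.mem_Ioc] at hk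
      have hc : ((d - n + 1 + (k - ((d:ℤ) - n + 1)).toNat : ℕ) : ℤ) = k := by omega
      have hcr : ((d - n + 1 + (k - ((d:ℤ) - n + 1)).toNat : ℕ) : ℝ) = (k:ℝ) := by
        exact_mod_cast congrArg (Int.cast : ℤ → ℝ) hc
      rw [hcr]
      have hk0 : (k:ℝ) ≠ 0 := by
        have : (0:ℤ) < k := by omega
        exact_mod_cast this.ne'
      field_simp
      ring
  rw [step5, step6]

/-- Pointwise convergence of the Lagrange basis polynomials `f_{d,n}` to the
shifted normalized sinc function as `d → ∞`. -/
theorem stmt_14 (n : ℕ) (v : ℝ) :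
    Tendsto (fun d : ℕ =>
        ∏ j ∈ (Finset.Icc (-(d:ℤ)) d).erase (n : ℤ), (v - j) / ((n : ℝ) - j))
      atTop
      (nhds (if v = (n : ℝ) then 1
        else Real.sin (π * (v - n)) / (π * (v - n)))) := by
  rcases eq_or_ne v (n:ℝ) with hv | hv
  · rw [if_pos hv]
    have h1 : ∀ d : ℕ,
        (∏ j ∈ (Finset.Icc (-(d:ℤ)) d).erase (n : ℤ), (v - j) / ((n : ℝ) - j)) = 1 := by
      intro d
      refine Finset.prod_eq_one fun j hj => ?_
      have hj' : j ≠ (n:ℤ) := Finset.ne_of_mem_erase hj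
      have hne : (n:ℝ) - (j:ℝ) ≠ 0 := by
        intro h
        apply hj'
        have : ((n:ℤ):ℝ) = (j:ℝ) := by push_cast; linarith
        exact_mod_cast this.symm
      rw [hv]
      exact div_self hne
    exact Tendsto.congr (fun d => (h1 d).symm) tendsto_const_nhds
  · rw [if_neg hv]
    set w : ℝ := v - n with hw
    have hw0 : w ≠ 0 := sub_ne_zero.mpr hv
    have hπw : π * w ≠ 0 := mul_ne_zero Real.pi_ne_zero hw0
    -- Euler product limit
    have hP : Tendsto (fun m : ℕ => ∏ j ∈ Finset.range m, (1 - w^2 / ((j:ℝ)+1)^2)) atTop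
        (nhds (Real.sin (π * w) / (π * w))) := by
      have he := (Real.tendsto_euler_sin_prod w).div_const (π * w)
      refine he.congr fun m => ?_
      rw [mul_comm (π * w), mul_div_assoc, div_self hπw, mul_one]
    have hA : Tendsto (fun d : ℕ => ∏ j ∈ Finset.range (d - n), (1 - w^2 / ((j:ℝ)+1)^2)) atTop
        (nhds (Real.sin (π * w) / (π * w))) :=
      hP.comp (tendsto_sub_atTop_nat n)
    have hB : Tendsto (fun d : ℕ => ∏ i ∈ Finset.range (2*n),
        (1 + w / ((d - n + 1 + i : ℕ) : ℝ))) atTop (nhds 1) := by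
      have : Tendsto (fun d : ℕ => ∏ i ∈ Finset.range (2*n),
          (1 + w / ((d - n + 1 + i : ℕ) : ℝ))) atTop
          (nhds (∏ _i ∈ Finset.range (2*n), (1:ℝ))) := by
        refine tendsto_finset_prod _ fun i _ => ?_
        have h1 : Tendsto (fun d : ℕ => d - n + 1 + i) atTop atTop :=
          tendsto_atTop_mono (fun d => by omega) (tendsto_sub_atTop_nat n)
        have hden : Tendsto (fun d : ℕ => ((d - n + 1 + i : ℕ) : ℝ)) atTop atTop :=
          tendsto_natCast_atTop_atTop.comp h1
        have h2 : Tendsto (fun d : ℕ => w / ((d - n + 1 + i : ℕ) : ℝ)) atTop (nhds 0) :=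
          Tendsto.div_atTop tendsto_const_nhds hden
        have h3 : Tendsto (fun d : ℕ => 1 + w / ((d - n + 1 + i : ℕ) : ℝ)) atTop
            (nhds (1 + 0)) := Tendsto.add tendsto_const_nhds h2
        simpa using h3
      simpa using this
    have hcomb := hA.mul hB
    rw [mul_one] at hcomb
    refine Tendsto.congr' ?_ hcomb
    filter_upwards [eventually_ge_atTop n] with d hd
    exact (key_id n d hd v).symm
end

section
/- Let a_{-d}, ..., a_d be rational numbers and set v_i = (1/i!) ∑_{k=-d}^{d} k^i a_k. Then a_0 = ∑_{i=0}^{∞} (-1)^i π^{2i} / (2i+1) · v_{2i}, i.e., a_0 = v_0 - (π²/3) v_2 + (π⁴/5) v_4 - (π⁶/7) v_6 + ⋯, and this series converges. -/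
open Real

lemma sinc_sum (k : ℤ) :
    HasSum (fun i : ℕ => (-1) ^ i * (π * k) ^ (2 * i) / ((2 * i + 1).factorial : ℝ))
      (if k = 0 then 1 else 0) := by
  by_cases hk : k = 0
  · rw [if_pos hk]
    have heq : (fun i : ℕ => (-1) ^ i * (π * (k:ℝ)) ^ (2 * i) / ((2 * i + 1).factorial : ℝ))
        = fun i : ℕ => if i = 0 then 1 else 0 := by
      funext i
      rcases Nat.eq_zero_or_pos i with h | h
      · simp [h, hk]
      · rw [if_neg (by omega)]
        simp [hk, zero_pow (by omega : 2 * i ≠ 0)]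
    rw [heq]
    simpa using hasSum_ite_eq (0 : ℕ) (1 : ℝ)
  · rw [if_neg hk]
    have hx : (π * k : ℝ) ≠ 0 :=
      mul_ne_zero Real.pi_ne_zero (by exact_mod_cast hk)
    have h := (Real.hasSum_sin (π * k)).div_const (π * k)
    have hs : Real.sin (π * k) = 0 := by
      rw [mul_comm]; exact Real.sin_int_mul_pi k
    rw [hs, zero_div] at h
    convert h using 2 with i
    · rfl
    field_simp
    ring

/-- The central coefficient formula:
`a₀ = v₀ - (π²/3)v₂ + (π⁴/5)v₄ - (π⁶/7)v₆ + ⋯`, where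
`v_i = (1/i!) ∑_{k=-d}^{d} k^i a_k`. -/
theorem stmt_15 (d : ℕ) (a : ℤ → ℚ) (v : ℕ → ℝ)
    (hv : ∀ i, v i = ((i.factorial : ℝ))⁻¹ *
      ∑ k ∈ Finset.Icc (-(d:ℤ)) d, (k : ℝ) ^ i * (a k : ℝ)) :
    HasSum (fun i : ℕ => (-1) ^ i * π ^ (2 * i) / (2 * i + 1) * v (2 * i))
      ((a 0 : ℝ)) := by
  have key : ∀ k ∈ Finset.Icc (-(d:ℤ)) d,
      HasSum (fun i : ℕ => ((-1) ^ i * (π * k) ^ (2 * i) / ((2 * i + 1).factorial : ℝ)) * (a k : ℝ))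
        ((if k = 0 then 1 else 0) * (a k : ℝ)) :=
    fun k _ => (sinc_sum k).mul_right _
  have hsum := hasSum_sum key
  have h0 : (∑ k ∈ Finset.Icc (-(d:ℤ)) d, (if k = 0 then (1:ℝ) else 0) * (a k : ℝ)) = (a 0 : ℝ) := by
    simp only [ite_mul, one_mul, zero_mul, Finset.sum_ite_eq' (Finset.Icc (-(d:ℤ)) d) 0]
    simp [Finset.mem_Icc]
  rw [h0] at hsum
  convert hsum using 1
  funext i
  rw [hv (2 * i), Finset.mul_sum, Finset.mul_sum]
  apply Finset.sum_congr rfl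
  intro k _
  have hf : ((2 * i + 1).factorial : ℝ) = (2 * i + 1) * ((2 * i).factorial : ℝ) := by
    rw [Nat.factorial_succ]; push_cast; ring
  have hfac : ((2 * i).factorial : ℝ) ≠ 0 := Nat.cast_ne_zero.mpr (Nat.factorial_ne_zero _)
  rw [mul_pow, hf]
  have h21 : (0:ℝ) < 2 * i + 1 := by positivity
  field_simp
end
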